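/- Let ζ > 0 and μ ∈ ℂ with |Im μ| < ζ/2, and let u_μ(α) := −Σ_{k∈ℤ} e^{−|k|ζ} · cos(2kμ) · e^{2ikα}/cosh(kζ). Then φ'(μ, ζ/2) + (1/(2π)) · ∫_{−π/2}^{π/2} φ'(β, ζ/2) · u_μ(β) dβ = Σ_{k∈ℤ} e^{2ikμ}/cosh(kζ). Equivalently, the dressed energy ε(μ) = −2·sinh(ζ)·[φ'(μ, ζ/2) + (1/(2π))∫_{−π/2}^{π/2} φ'(β, ζ/2)·u_μ(β) dβ] of a close excitation equals −2π·sinh(ζ)·ρ(μ). -/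

import Mathlib

/-- `φ'(ν, γ) = sinh(2γ)/(sin(ν+iγ) sin(ν−iγ))`. -/
noncomputable def phiP (ν : ℂ) (γ : ℝ) : ℂ :=
  Complex.sinh (2 * (γ : ℂ)) /
    (Complex.sin (ν + Complex.I * (γ : ℂ)) * Complex.sin (ν - Complex.I * (γ : ℂ)))

/-- The Fourier-series solution `u_μ(α) = −Σ_{k∈ℤ} e^{−|k|ζ} cos(2kμ) e^{2ikα}/cosh(kζ)`
of the dressing integral equation for a close excitation of rapidity `μ`. -/
noncomputable def uFun (ζ : ℝ) (μ : ℂ) (α : ℝ) : ℂ :=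
  -∑' k : ℤ, (Real.exp (-(|(k : ℝ)|) * ζ) : ℂ) * Complex.cos (2 * k * μ) *
      Complex.exp (2 * Complex.I * k * (α : ℂ)) / Complex.cosh (k * (ζ : ℂ))

/-- The ground-state root density `ρ(μ) = (1/π) Σ_{k∈ℤ} e^{2ikμ}/cosh(kζ)`. -/
noncomputable def rho (ζ : ℝ) (μ : ℂ) : ℂ :=
  (1 / (Real.pi : ℂ)) * ∑' k : ℤ, Complex.exp (2 * Complex.I * k * μ) / Complex.cosh (k * (ζ : ℂ))

open Complex MeasureTheory
open scoped Real

/-!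
For `|Im z| < ζ/2` the kernel `φ'(z, ζ/2)` is a Poisson kernel,
`φ'(z, ζ/2) = Σ_k 2 e^{-|k|ζ} e^{2ikz}`, so its Fourier coefficients on `[-π/2, π/2]` are
`2π e^{-|k|ζ}`. Integrating the Fourier series of `u_μ` against it term by term turns the
left-hand side into `Σ_k (2 e^{-|k|ζ} e^{2ikμ} - e^{-2|k|ζ} cos(2kμ) / cosh(kζ))`. Pairing the
terms `k` and `-k`, this series and `Σ_k e^{2ikμ} / cosh(kζ)` become cosine series whose
coefficients agree because `2 e^{-|k|ζ} cosh(kζ) = 1 + e^{-2|k|ζ}`.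
-/

theorem sin_add_I_mul_mul_sin_sub_I_mul (z γ : ℂ) :
    sin (z + I * γ) * sin (z - I * γ) = (cosh (2 * γ) - cos (2 * z)) / 2 := by
  rw [← cos_mul_I, cos_sub_cos]
  have h : sin ((2 * γ * I - 2 * z) / 2) = -sin (z - I * γ) := by
    rw [← sin_neg]; ring_nf
  rw [h]; ring_nf

theorem phiP_half (z : ℂ) (ζ : ℝ) :
    phiP z (ζ / 2) = 2 * sinh ζ / (cosh ζ - cos (2 * z)) := by
  rw [phiP, sin_add_I_mul_mul_sin_sub_I_mul]
  push_cast
  rw [mul_div_cancel₀ _ two_ne_zero]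
  field_simp

theorem summable_exp_neg_abs_mul {r : ℝ} (hr : 0 < r) :
    Summable fun k : ℤ => Real.exp (-|(k : ℝ)| * r) := by
  have h : Summable fun n : ℕ => Real.exp (-r) ^ n :=
    summable_geometric_of_lt_one (Real.exp_nonneg _) (Real.exp_lt_one_iff.mpr (by linarith))
  apply Summable.of_nat_of_neg <;> refine h.congr fun n => ?_ <;>
    rw [← Real.exp_nat_mul] <;> simp

theorem hasSum_exp_neg_abs_mul_exp {ζ : ℝ} {z : ℂ} (hz : |z.im| < ζ / 2) :
    HasSum (fun k : ℤ => (Real.exp (-|(k : ℝ)| * ζ) : ℂ) * exp (2 * I * k * z))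
      (sinh ζ / (cosh ζ - cos (2 * z))) := by
  set E := exp (ζ : ℂ)
  set w := exp (2 * I * z)
  set A := w / E with hAdef
  set B := 1 / (w * E) with hBdef
  have hE : E ≠ 0 := exp_ne_zero _
  have hw : w ≠ 0 := exp_ne_zero _
  have hA : ‖A‖ < 1 := by
    rw [norm_div, div_lt_one (by positivity), norm_exp, norm_exp, Real.exp_lt_exp]
    simp [abs_lt] at hz ⊢; linarith
  have hB : ‖B‖ < 1 := by
    rw [norm_div, norm_one, div_lt_one (norm_pos_iff.mpr (mul_ne_zero hw hE)), norm_mul,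
      norm_exp, norm_exp, ← Real.exp_add, Real.one_lt_exp_iff]
    simp [abs_lt] at hz ⊢; linarith
  have hA1 : 1 - A ≠ 0 := sub_ne_zero.mpr fun h => by simp [← h] at hA
  have hB1 : 1 - B ≠ 0 := sub_ne_zero.mpr fun h => by simp [← h] at hB
  have hsum : HasSum (fun k : ℤ => (Real.exp (-|(k : ℝ)| * ζ) : ℂ) * exp (2 * I * k * z))
      ((1 - A)⁻¹ + B * (1 - B)⁻¹) := by
    refine HasSum.of_nat_of_neg_add_one ((hasSum_geometric_of_norm_lt_one hA).congr_fun ?_)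
      (((hasSum_geometric_of_norm_lt_one hB).mul_left B).congr_fun ?_) <;> intro n
    · rw [hAdef, div_eq_mul_inv, ← exp_neg, ← exp_add, ← exp_nat_mul, ofReal_exp, ← exp_add]
      push_cast [Nat.abs_cast]; ring_nf
    · rw [hBdef, ← pow_succ', one_div, ← exp_add, ← exp_neg, ← exp_nat_mul, ofReal_exp,
        ← exp_add]
      push_cast
      rw [abs_neg, abs_of_nonneg (by positivity)]; congr 1; push_cast; ring
  convert hsum using 1
  have hcos : cos (2 * z) = (w + w⁻¹) / 2 := by
    rw [cos, show 2 * z * I = 2 * I * z by ring, show -(2 * z) * I = -(2 * I * z) by ring,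
      exp_neg]
  have hnum : sinh ζ = E * (1 - A * B) / 2 := by
    rw [sinh, exp_neg, hAdef, hBdef]; field_simp; ring
  have hden : cosh ζ - cos (2 * z) = E * (1 - A) * (1 - B) / 2 := by
    rw [cosh, exp_neg, hcos, hAdef, hBdef]; field_simp; ring
  rw [hnum, hden]
  field_simp
  ring

theorem hasSum_phiP {ζ : ℝ} {z : ℂ} (hz : |z.im| < ζ / 2) :
    HasSum (fun k : ℤ => 2 * (Real.exp (-|(k : ℝ)| * ζ) : ℂ) * exp (2 * I * k * z))
      (phiP z (ζ / 2)) := by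
  rw [phiP_half, mul_div_assoc]
  simpa only [mul_assoc] using (hasSum_exp_neg_abs_mul_exp hz).mul_left 2

theorem norm_exp_two_mul_I_int_mul_ofReal (k : ℤ) (β : ℝ) : ‖exp (2 * I * k * β)‖ = 1 := by
  simp [norm_exp]

theorem norm_exp_two_mul_I_int_mul_le (k : ℤ) (μ : ℂ) :
    ‖exp (2 * I * k * μ)‖ ≤ Real.exp (|(k : ℝ)| * (2 * |μ.im|)) := by
  rw [norm_exp, Real.exp_le_exp]
  simp only [mul_re, mul_im, re_ofNat, im_ofNat, I_re, I_im, intCast_re, intCast_im]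
  nlinarith [neg_abs_le ((k : ℝ) * μ.im), abs_mul (k : ℝ) μ.im]

theorem norm_two_mul_exp_neg_abs_mul_exp (ζ : ℝ) (k : ℤ) (β : ℝ) :
    ‖2 * (Real.exp (-|(k : ℝ)| * ζ) : ℂ) * exp (2 * I * k * β)‖
      = 2 * Real.exp (-|(k : ℝ)| * ζ) := by
  rw [norm_mul, norm_exp_two_mul_I_int_mul_ofReal, mul_one, norm_mul, norm_real,
    Real.norm_of_nonneg (Real.exp_nonneg _), RCLike.norm_ofNat]

theorem norm_phiP_le {ζ : ℝ} (hζ : 0 < ζ) (β : ℝ) :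
    ‖phiP β (ζ / 2)‖ ≤ ∑' k : ℤ, 2 * Real.exp (-|(k : ℝ)| * ζ) :=
  (hasSum_phiP (by simpa using half_pos hζ)).norm_le_of_bounded
    ((summable_exp_neg_abs_mul hζ).mul_left 2).hasSum
    fun k => (norm_two_mul_exp_neg_abs_mul_exp ζ k β).le

@[fun_prop]
theorem measurable_phiP (γ : ℝ) : Measurable fun β : ℝ => phiP β γ := by
  unfold phiP; fun_prop

theorem norm_cos_le_exp_abs_im (z : ℂ) : ‖cos z‖ ≤ Real.exp |z.im| := by
  have h₁ : ‖exp (z * I)‖ ≤ Real.exp |z.im| := by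
    rw [norm_exp]; gcongr; simpa using neg_le_abs z.im
  have h₂ : ‖exp (-z * I)‖ ≤ Real.exp |z.im| := by
    rw [norm_exp]; gcongr; simpa using le_abs_self z.im
  rw [cos, norm_div, RCLike.norm_ofNat]
  linarith [norm_add_le (exp (z * I)) (exp (-z * I))]

theorem norm_div_cosh_le (w : ℂ) (x : ℝ) : ‖w / cosh x‖ ≤ 2 * ‖w‖ * Real.exp (-|x|) := by
  have hcosh : 1 ≤ 2 * Real.exp (-|x|) * Real.cosh x := by
    rw [Real.cosh_eq, Real.exp_neg]
    have := Real.exp_abs_le x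
    field_simp
    linarith
  rw [norm_div, ← ofReal_cosh, norm_real, Real.norm_of_nonneg (Real.cosh_pos x).le,
    div_le_iff₀ (Real.cosh_pos x)]
  nlinarith [norm_nonneg w]

theorem summable_norm_div_cosh {f : ℤ → ℂ} {s ζ : ℝ} (hs : s < ζ)
    (hf : ∀ k : ℤ, ‖f k‖ ≤ Real.exp (|(k : ℝ)| * s)) :
    Summable fun k : ℤ => ‖f k / cosh (k * ζ)‖ := by
  refine Summable.of_nonneg_of_le (fun _ => norm_nonneg _) (fun k => ?_)
    ((summable_exp_neg_abs_mul (sub_pos.mpr hs)).mul_left 2)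
  have hkζ : |(k : ℝ)| * ζ ≤ |(k * ζ : ℝ)| := by
    rw [abs_mul]; exact mul_le_mul_of_nonneg_left (le_abs_self ζ) (abs_nonneg _)
  calc ‖f k / cosh (k * ζ)‖ ≤ 2 * ‖f k‖ * Real.exp (-|(k * ζ : ℝ)|) := by
        exact_mod_cast norm_div_cosh_le (f k) (k * ζ)
    _ ≤ 2 * Real.exp (|(k : ℝ)| * s) * Real.exp (-(|(k : ℝ)| * ζ)) := by
        gcongr; exact hf k
    _ = 2 * Real.exp (-|(k : ℝ)| * (ζ - s)) := by
        rw [mul_assoc, ← Real.exp_add]; ring_nf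

theorem integral_exp_two_mul_I_int_mul (m : ℤ) :
    ∫ β in -(π / 2)..π / 2, exp (2 * I * m * β) = if m = 0 then (π : ℂ) else 0 := by
  split_ifs with hm
  · simp [hm]
  · have hc : 2 * I * m ≠ 0 := by simp [hm, I_ne_zero]
    rw [integral_exp_mul_complex hc, div_eq_zero_iff, sub_eq_zero]
    exact Or.inl (exp_eq_exp_iff_exists_int.mpr ⟨m, by push_cast; ring⟩)

theorem hasSum_intervalIntegral_of_norm_le {ι E : Type*} [Countable ι] [NormedAddCommGroup E]
    [NormedSpace ℝ E] {μ : Measure ℝ} [IsLocallyFiniteMeasure μ] {F : ι → ℝ → E} {f : ℝ → E}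
    {M : ι → ℝ} {a b : ℝ} (hF : ∀ n, AEStronglyMeasurable (F n) μ) (hFM : ∀ n x, ‖F n x‖ ≤ M n)
    (hM : Summable M) (hf : ∀ x, HasSum (fun n => F n x) (f x)) :
    HasSum (fun n => ∫ x in a..b, F n x ∂μ) (∫ x in a..b, f x ∂μ) :=
  intervalIntegral.hasSum_integral_of_dominated_convergence (fun n _ => M n)
    (fun n => (hF n).restrict) (fun n => .of_forall fun x _ => hFM n x)
    (.of_forall fun _ _ => hM) intervalIntegrable_const (.of_forall fun x _ => hf x)

theorem integral_phiP_mul_exp {ζ : ℝ} (hζ : 0 < ζ) (k : ℤ) :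
    ∫ β in -(π / 2)..π / 2, phiP β (ζ / 2) * exp (2 * I * k * β)
      = 2 * π * (Real.exp (-|(k : ℝ)| * ζ) : ℂ) := by
  have hterms := hasSum_intervalIntegral_of_norm_le (μ := volume) (a := -(π / 2)) (b := π / 2)
    (fun n => by fun_prop) (fun n β => ?_) ((summable_exp_neg_abs_mul hζ).mul_left 2)
    (fun β => (hasSum_phiP (ζ := ζ) (z := β) (by simpa using half_pos hζ)).mul_right
      (exp (2 * I * k * β)))
  · have hint : ∀ n : ℤ, ∫ β in -(π / 2)..π / 2,
        2 * (Real.exp (-|(n : ℝ)| * ζ) : ℂ) * exp (2 * I * n * β) * exp (2 * I * k * β)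
        = 2 * (Real.exp (-|(n : ℝ)| * ζ) : ℂ) * if n + k = 0 then (π : ℂ) else 0 := by
      intro n
      have hexp : ∀ β : ℝ, exp (2 * I * n * β) * exp (2 * I * k * β)
          = exp (2 * I * (n + k : ℤ) * β) := fun β => by rw [← exp_add]; push_cast; ring_nf
      simp only [mul_assoc _ (exp _), hexp]
      rw [intervalIntegral.integral_const_mul, integral_exp_two_mul_I_int_mul]
    simp only [hint] at hterms
    have hsingle := hasSum_single (f := fun n : ℤ =>
      2 * (Real.exp (-|(n : ℝ)| * ζ) : ℂ) * if n + k = 0 then (π : ℂ) else 0) (-k)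
      fun n hn => by simp [show n + k ≠ 0 by omega]
    rw [hterms.unique hsingle, if_pos (neg_add_cancel k), Int.cast_neg, abs_neg]
    ring
  · rw [norm_mul, norm_exp_two_mul_I_int_mul_ofReal, mul_one,
      norm_two_mul_exp_neg_abs_mul_exp ζ n β]

theorem hasSum_integral_phiP_mul_uFun {ζ : ℝ} (hζ : 0 < ζ) {μ : ℂ} (hμ : |μ.im| < ζ / 2) :
    HasSum (fun k : ℤ => -((Real.exp (-|(k : ℝ)| * ζ) : ℂ) ^ 2 * cos (2 * k * μ) / cosh (k * ζ)))
      (1 / (2 * π) * ∫ β in -(π / 2)..π / 2, phiP β (ζ / 2) * uFun ζ μ β) := by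
  set c : ℤ → ℂ := fun k => (Real.exp (-|(k : ℝ)| * ζ) : ℂ) * (cos (2 * k * μ) / cosh (k * ζ))
    with hcdef
  have hc : Summable fun k => ‖c k‖ := by
    refine (summable_norm_div_cosh (f := fun k : ℤ => cos (2 * k * μ)) (s := 2 * |μ.im|)
      (ζ := ζ) (by linarith) fun k => ?_).of_nonneg_of_le (fun _ => norm_nonneg _) fun k => ?_
    · refine (norm_cos_le_exp_abs_im _).trans (le_of_eq ?_)
      simp [abs_mul]; ring
    · rw [norm_mul, norm_real, Real.norm_of_nonneg (Real.exp_nonneg _)]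
      refine mul_le_of_le_one_left (norm_nonneg _) (Real.exp_le_one_iff.mpr ?_)
      nlinarith [abs_nonneg (k : ℝ)]
  have hu : ∀ β : ℝ, HasSum (fun k => -(c k * exp (2 * I * k * β))) (uFun ζ μ β) := by
    intro β
    have hs : Summable fun k => c k * exp (2 * I * k * β) :=
      .of_norm (by simpa [norm_exp_two_mul_I_int_mul_ofReal] using hc)
    have hval : uFun ζ μ β = ∑' k, -(c k * exp (2 * I * k * β)) := by
      rw [uFun, ← tsum_neg]
      exact tsum_congr fun k => by simp only [hcdef]; ring
    exact hval ▸ hs.neg.hasSum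
  have hint := hasSum_intervalIntegral_of_norm_le (μ := volume) (a := -(π / 2)) (b := π / 2)
    (F := fun k (β : ℝ) => -c k * (phiP β (ζ / 2) * exp (2 * I * k * β)))
    (fun k => by fun_prop) (fun k β => ?_) (hc.mul_right (∑' k : ℤ, 2 * Real.exp (-|(k : ℝ)| * ζ)))
    (fun β => ((hu β).mul_left (phiP β (ζ / 2))).congr_fun fun k => by ring)
  · simp only [intervalIntegral.integral_const_mul, integral_phiP_mul_exp hζ] at hint
    refine (hint.mul_left (1 / (2 * π) : ℂ)).congr_fun fun k => ?_
    rw [hcdef]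
    field_simp
  · rw [norm_mul, norm_mul, norm_neg, norm_exp_two_mul_I_int_mul_ofReal, mul_one]
    exact mul_le_mul_of_nonneg_left (norm_phiP_le hζ β) (norm_nonneg _)

theorem tsum_eq_tsum_of_add_comp_neg_eq {β E : Type*} [InvolutiveNeg β] [AddCommMonoid E]
    [TopologicalSpace E] [ContinuousAdd E] [T2Space E] [IsAddTorsionFree E]
    {f g : β → E} (hf : Summable f) (hg : Summable g) (hfg : ∀ k, f k + f (-k) = g k + g (-k)) :
    ∑' k, f k = ∑' k, g k := by
  have hsym {h : β → E} (hh : Summable h) : ∑' k, (h k + h (-k)) = 2 • ∑' k, h k := by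
    have hneg : Summable fun k => h (-k) := (Equiv.neg β).summable_iff.mpr hh
    rw [hh.tsum_add hneg, tsum_comp_neg, two_nsmul]
  exact nsmul_right_injective two_ne_zero ((hsym hf).symm.trans ((tsum_congr hfg).trans (hsym hg)))

theorem two_mul_exp_neg_abs_mul_mul_cosh (t x : ℝ) :
    2 * Real.exp (-|t| * x) * Real.cosh (t * x) = 1 + Real.exp (-|t| * x) ^ 2 := by
  rw [Real.cosh_eq]
  rcases abs_cases t with ⟨ht, -⟩ | ⟨ht, -⟩
  · rw [ht, neg_mul, Real.exp_neg]; field_simp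
  · rw [ht, neg_neg, Real.exp_neg]; field_simp; ring

theorem dressed_term_add_comp_neg (ζ : ℝ) (μ : ℂ) (k : ℤ) :
    let a : ℤ → ℂ := fun k => Real.exp (-|(k : ℝ)| * ζ)
    let F : ℤ → ℂ := fun k =>
      2 * a k * exp (2 * I * k * μ) + -(a k ^ 2 * cos (2 * k * μ) / cosh (k * ζ))
    let G : ℤ → ℂ := fun k => exp (2 * I * k * μ) / cosh (k * ζ)
    F k + F (-k) = G k + G (-k) := by
  intro a F G
  have hC : cosh (k * ζ) ≠ 0 := by
    rw [← ofReal_intCast, ← ofReal_mul, ← ofReal_cosh]; exact_mod_cast (Real.cosh_pos _).ne'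
  have hkey : 2 * a k * cosh (k * ζ) = 1 + a k ^ 2 := by
    simp only [a]
    rw [← ofReal_intCast, ← ofReal_mul, ← ofReal_cosh]
    exact_mod_cast two_mul_exp_neg_abs_mul_mul_cosh k ζ
  have hcos : cos (2 * k * μ) = (exp (2 * I * k * μ) + (exp (2 * I * k * μ))⁻¹) / 2 := by
    rw [cos, ← exp_neg]; ring_nf
  simp only [F, G, a, Int.cast_neg, abs_neg, mul_neg, neg_mul, cos_neg, cosh_neg, exp_neg] at hkey ⊢
  rw [hcos]
  field_simp
  linear_combination (2 + 2 * exp (2 * I * k * μ) ^ 2) * hkey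

/-- Dressed energy of a close excitation: for `ζ > 0` and `|Im μ| < ζ/2`,
`φ'(μ,ζ/2) + (1/(2π)) ∫_{−π/2}^{π/2} φ'(β,ζ/2) u_μ(β) dβ = Σ_{k∈ℤ} e^{2ikμ}/cosh(kζ)`;
equivalently, `ε(μ) = −2 sinh(ζ) [φ'(μ,ζ/2) + (1/(2π)) ∫ φ'(·,ζ/2) u_μ] = −2π sinh(ζ) ρ(μ)`. -/
theorem close_excitation_dressed_energy
    (ζ : ℝ) (hζ : 0 < ζ) (μ : ℂ) (hμ : |μ.im| < ζ / 2) :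
    (phiP μ (ζ / 2) +
        (1 / (2 * (Real.pi : ℂ))) *
          ∫ β in (-(Real.pi / 2))..(Real.pi / 2), phiP (β : ℂ) (ζ / 2) * uFun ζ μ β
      = ∑' k : ℤ, Complex.exp (2 * Complex.I * k * μ) / Complex.cosh (k * (ζ : ℂ))) ∧
    -2 * (Real.sinh ζ : ℂ) *
        (phiP μ (ζ / 2) +
          (1 / (2 * (Real.pi : ℂ))) *
            ∫ β in (-(Real.pi / 2))..(Real.pi / 2), phiP (β : ℂ) (ζ / 2) * uFun ζ μ β)
      = -2 * (Real.pi : ℂ) * (Real.sinh ζ : ℂ) * rho ζ μ := by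
  have hseries := (hasSum_phiP hμ).add (hasSum_integral_phiP_mul_uFun hζ hμ)
  have hG : Summable fun k : ℤ => exp (2 * I * k * μ) / cosh (k * ζ) :=
    .of_norm (summable_norm_div_cosh (by linarith) (norm_exp_two_mul_I_int_mul_le · μ))
  have hdressed : phiP μ (ζ / 2) + 1 / (2 * π) *
        ∫ β in -(π / 2)..π / 2, phiP β (ζ / 2) * uFun ζ μ β
      = ∑' k : ℤ, exp (2 * I * k * μ) / cosh (k * ζ) := by
    rw [← hseries.tsum_eq]
    exact tsum_eq_tsum_of_add_comp_neg_eq hseries.summable hG (dressed_term_add_comp_neg ζ μ)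
  refine ⟨hdressed, ?_⟩
  rw [hdressed, rho]
  generalize ∑' k : ℤ, exp (2 * I * k * μ) / cosh (k * ζ) = S
  field_simp
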